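/- Let R be a PVMD, I a t-ideal of R, {P_α} the set of minimal prime ideals of I, and {M_β} the set of t-maximal ideals of R that do not contain I. For each α, let Q_α be the unique prime ideal determined by ⋂_{n≥1} IⁿR_{P_α} = Q_α R_{P_α}. Then: (1) T(I) ⊆ (⋂_α R_{Q_α}) ∩ (⋂_β R_{M_β}); and (2) if I has only finitely many minimal primes, equality holds. -/

import Mathlib

/-!
Common definitions: star operations (`v`- and `t`-closure), `t`-ideals, `t`-invertibility,
PVMDs, overrings, `t`-linked and `t`-flat overrings, localizations inside the quotient
field, Nagata and Kaplansky transforms, endomorphism rings of ideals.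
-/

open scoped Classical

namespace PVMDPaper

noncomputable section

section Generic

variable (A : Type*) [CommRing A] (K : Type*) [Field K] [Algebra A K]

/-- The image of an integral ideal of `A` inside the field `K`, as an `A`-submodule of `K`. -/
def toK (I : Ideal A) : Submodule A K := Submodule.map (Algebra.linearMap A K) I

variable {A K}

/-- The dual `I⁻¹ = (A : I) = {x ∈ K : x I ⊆ A}` of a submodule of `K`. -/
def dual (I : Submodule A K) : Submodule A K := 1 / I

/-- The `v`-closure `I_v = (I⁻¹)⁻¹`. -/
def vOp (I : Submodule A K) : Submodule A K := 1 / (1 / I)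

/-- The `t`-closure `I_t`: the union of `J_v` where `J` ranges over the nonzero finitely
generated submodules `J ≤ I` (the union of this directed family is its supremum). -/
def tOp (I : Submodule A K) : Submodule A K :=
  sSup {V | ∃ J : Submodule A K, J ≠ ⊥ ∧ J.FG ∧ J ≤ I ∧ V = vOp J}

variable (K)

/-- An (integral) ideal `I` of `A` is a `t`-ideal if `I = I_t`. -/
def IsTIdeal (I : Ideal A) : Prop := tOp (toK A K I) = toK A K I

/-- An ideal `I` is `t`-invertible if `(I I⁻¹)_t = A`. -/
def IsTInvertible (I : Ideal A) : Prop := tOp (toK A K I * dual (toK A K I)) = 1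

/-- A `t`-maximal ideal: an ideal maximal in the set of proper integral `t`-ideals. -/
def IsTMaximal (M : Ideal A) : Prop :=
  M ≠ ⊤ ∧ IsTIdeal K M ∧ ∀ J : Ideal A, J ≠ ⊤ → IsTIdeal K J → M ≤ J → J = M

variable (A)

/-- `A` is a Prüfer `v`-multiplication domain: every nonzero finitely generated ideal
is `t`-invertible. -/
def IsPVMD : Prop := ∀ I : Ideal A, I ≠ ⊥ → I.FG → IsTInvertible K I

/-- `Spec_t(A)` is Noetherian: the ascending chain condition on radical `t`-ideals. -/
def TSpecNoetherian : Prop :=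
  ∀ f : ℕ →o Ideal A, (∀ n, IsTIdeal K (f n) ∧ (f n).radical = f n) →
    ∃ n, ∀ m, n ≤ m → f m = f n

variable {A K}

/-- A submodule of `K` is a subring of `K` iff it contains `1` and is closed under
multiplication (being an additive subgroup already). -/
def IsSubringOf (S : Submodule A K) : Prop :=
  (1 : K) ∈ S ∧ ∀ x ∈ S, ∀ y ∈ S, x * y ∈ S

variable (K)

/-- The localization `A_P = {a/s : a ∈ A, s ∈ A ∖ P}` viewed as a subset of `K`. -/
def loc (P : Ideal A) : Set K :=
  {x | ∃ a s : A, s ∉ P ∧ x * algebraMap A K s = algebraMap A K a}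

/-- The set `J A_P = {a/s : a ∈ J, s ∈ A ∖ P} ⊆ K`. -/
def locIdealAt (J P : Ideal A) : Set K :=
  {x | ∃ a ∈ J, ∃ s : A, s ∉ P ∧ x * algebraMap A K s = algebraMap A K a}

/-- `Z(A, I)`: the set of zero divisors on `A/I`. -/
def ZSet (I : Ideal A) : Set A := {x | ∃ a : A, a ∉ I ∧ x * a ∈ I}

/-- `Q` is a maximal prime ideal of `Z(A,I)`: a prime contained in `Z(A,I)`, maximal
(under inclusion) among the primes contained in `Z(A,I)`. -/
def MaxPrimeOfZ (I Q : Ideal A) : Prop :=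
  Q.IsPrime ∧ (Q : Set A) ⊆ ZSet I ∧
    ∀ Q' : Ideal A, Q'.IsPrime → (Q' : Set A) ⊆ ZSet I → Q ≤ Q' → Q' = Q

end Generic

section Overring

variable {R : Type*} [CommRing R] [IsDomain R]
variable {K : Type*} [Field K] [Algebra R K] [IsFractionRing R K]

/-- The extension `IT` of an ideal `I` of `R` to an overring `T`, as a `T`-submodule of `K`. -/
def extendI (I : Ideal R) (T : Subalgebra R K) : Submodule T K :=
  Submodule.span T (algebraMap R K '' (I : Set R))

/-- The extension `IT` of an `R`-submodule `I` of `K` to an overring `T`. -/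
def extendS (I : Submodule R K) (T : Subalgebra R K) : Submodule T K :=
  Submodule.span T (I : Set K)

/-- An overring `T` of `R` is `t`-linked over `R` if `(IT)⁻¹ = T` for each finitely
generated ideal `I` of `R` with `I⁻¹ = R`. -/
def IsTLinked (T : Subalgebra R K) : Prop :=
  ∀ I : Ideal R, I.FG → dual (toK R K I) = 1 → dual (extendI I T) = 1

/-- An overring `T` of `R` is `t`-flat over `R` if `T_M = R_{M ∩ R}` for each
`t`-maximal ideal `M` of `T`. -/
def IsTFlat (T : Subalgebra R K) : Prop :=
  ∀ M : Ideal T, IsTMaximal K M → loc K M = loc K (M.comap (algebraMap R T))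

variable (R K)

/-- `R` is a `tQR`-domain: a PVMD all of whose `t`-linked overrings are localizations
of `R` at multiplicative sets. -/
def IsTQR : Prop :=
  IsPVMD R K ∧ ∀ T : Subalgebra R K, IsTLinked T → ∃ S : Submonoid R,
    (T : Set K) = {x | ∃ a : R, ∃ s ∈ S, x * algebraMap R K s = algebraMap R K a}

variable {R K}
variable (K)

/-- The endomorphism ring `(I : I) = {x ∈ K : x I ⊆ I}` of an ideal `I`, as an
overring of `R`. -/
def endoRing (I : Ideal R) : Subalgebra R K where
  carrier := {x : K | ∀ y ∈ toK R K I, x * y ∈ toK R K I}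
  mul_mem' := by
    intro a b ha hb y hy
    rw [mul_assoc]
    exact ha _ (hb _ hy)
  one_mem' := by
    intro y hy
    rwa [one_mul]
  add_mem' := by
    intro a b ha hb y hy
    rw [add_mul]
    exact Submodule.add_mem _ (ha y hy) (hb y hy)
  zero_mem' := by
    intro y hy
    rw [zero_mul]
    exact Submodule.zero_mem _
  algebraMap_mem' := by
    intro r y hy
    rw [← Algebra.smul_def]
    exact Submodule.smul_mem _ r hy

set_option synthInstance.maxHeartbeats 400000 in
/-- The ideal `I`, viewed as an ideal of its endomorphism ring `(I : I)`. -/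
def idealInEndo (I : Ideal R) : Ideal (endoRing K I) where
  carrier := {x | (x : K) ∈ toK R K I}
  add_mem' := by
    intro a b ha hb
    simp only [Set.mem_setOf_eq] at *
    rw [AddMemClass.coe_add]
    exact Submodule.add_mem _ ha hb
  zero_mem' := by
    simp only [Set.mem_setOf_eq, ZeroMemClass.coe_zero]
    exact Submodule.zero_mem _
  smul_mem' := by
    intro c x hx
    simp only [Set.mem_setOf_eq] at *
    rw [smul_eq_mul, MulMemClass.coe_mul]
    exact c.2 _ hx

/-- The Kaplansky transform `Ω(I) = {u ∈ K : ∀ a ∈ I, ∃ n ≥ 1, u aⁿ ∈ R}`, as an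
overring of `R`. -/
def kaplansky (I : Ideal R) : Subalgebra R K where
  carrier := {u : K | ∀ a ∈ I, ∃ n : ℕ, 0 < n ∧
    ∃ r : R, u * (algebraMap R K a) ^ n = algebraMap R K r}
  mul_mem' := by
    intro u v hu hv a ha
    obtain ⟨n, hn, r, hr⟩ := hu a ha
    obtain ⟨m, hm, s, hs⟩ := hv a ha
    refine ⟨n + m, by omega, r * s, ?_⟩
    rw [map_mul, ← hr, ← hs, pow_add]
    ring
  one_mem' := by
    intro a ha
    exact ⟨1, one_pos, a, by rw [pow_one, one_mul]⟩
  add_mem' := by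
    intro u v hu hv a ha
    obtain ⟨n, hn, r, hr⟩ := hu a ha
    obtain ⟨m, hm, s, hs⟩ := hv a ha
    refine ⟨n + m, by omega, r * a ^ m + s * a ^ n, ?_⟩
    rw [map_add, map_mul, map_mul, map_pow, map_pow, ← hr, ← hs, pow_add, add_mul]
    ring
  zero_mem' := by
    intro a ha
    exact ⟨1, one_pos, 0, by rw [map_zero, zero_mul]⟩
  algebraMap_mem' := by
    intro r a ha
    exact ⟨1, one_pos, r * a, by rw [map_mul, pow_one]⟩

/-- The Nagata (ideal) transform `T(I) = ⋃_{n ≥ 1} (R : Iⁿ)`, as an overring of `R`. -/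
def nagata (I : Ideal R) : Subalgebra R K where
  carrier := {x : K | ∃ n : ℕ, ∀ y ∈ I ^ (n + 1),
    ∃ r : R, x * algebraMap R K y = algebraMap R K r}
  mul_mem' := by
    intro x x' hx hx'
    obtain ⟨n, hn⟩ := hx
    obtain ⟨m, hm⟩ := hx'
    refine ⟨n + m + 1, fun y hy => ?_⟩
    rw [show n + m + 1 + 1 = (n + 1) + (m + 1) by omega, pow_add] at hy
    refine Submodule.mul_induction_on hy ?_ ?_
    · intro a ha b hb
      obtain ⟨r, hr⟩ := hn a ha
      obtain ⟨s, hs⟩ := hm b hb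
      refine ⟨r * s, ?_⟩
      rw [map_mul, map_mul, ← hr, ← hs]
      ring
    · rintro y1 y2 ⟨r1, h1⟩ ⟨r2, h2⟩
      exact ⟨r1 + r2, by rw [map_add, map_add, mul_add, h1, h2]⟩
  one_mem' := ⟨0, fun y _ => ⟨y, by rw [one_mul]⟩⟩
  add_mem' := by
    intro x x' hx hx'
    obtain ⟨n, hn⟩ := hx
    obtain ⟨m, hm⟩ := hx'
    refine ⟨n + m + 1, fun y hy => ?_⟩
    have h1 : y ∈ I ^ (n + 1) := Ideal.pow_le_pow_right (by omega) hy
    have h2 : y ∈ I ^ (m + 1) := Ideal.pow_le_pow_right (by omega) hy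
    obtain ⟨r, hr⟩ := hn y h1
    obtain ⟨s, hs⟩ := hm y h2
    exact ⟨r + s, by rw [map_add, add_mul, hr, hs]⟩
  zero_mem' := ⟨0, fun y _ => ⟨0, by rw [map_zero, zero_mul]⟩⟩
  algebraMap_mem' := by
    intro r
    exact ⟨0, fun y _ => ⟨r * y, by rw [map_mul]⟩⟩

end Overring

/-!
In a PVMD, `R_P` is a valuation domain whenever `1 ∉ P_t`: writing `x = a/b`, the product
`(a, b)(a, b)⁻¹` has `t`-closure `R`, so it contains an element of `R ∖ P`, and its two summands
exhibit `x` or `x⁻¹` as a fraction with denominator outside `P`. This applies to `t`-maximal ideals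
and to minimal primes `P` of the `t`-ideal `I` (a finitely generated `J ⊆ P` has `s Jᴺ ⊆ I` for
some `s ∉ P`, so `1 ∈ J_v` would give `s ∈ I_t = I`).

If `x I^{n+1} ⊆ R` but `x ∉ R_Q` for `Q R_P = ⋂ Iᵏ R_P`, the valuation property puts
`x⁻¹ ∈ Q R_P ⊆ I^{2n+2} R_P`, and multiplying by `x` moves a denominator outside `P` into `I`.
Conversely, if `x = c/s` with `s ∉ Q` at each of finitely many minimal primes, one exponent `N`
keeps every `s` outside `I^{N+1} R_P`; for `y ∈ I^{N+1}` the valuation property of `R_M` then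
gives `xy ∈ R_M` for every `t`-maximal `M`, and `R = ⋂ R_M`.
-/

section StarOperation

variable {A K : Type*} [CommRing A] [Field K] [Algebra A K]

theorem one_div_antitone {S T : Submodule A K} (h : S ≤ T) : (1 : Submodule A K) / T ≤ 1 / S :=
  fun _ hz y hy => hz y (h hy)

theorem le_vOp (S : Submodule A K) : S ≤ vOp S :=
  Submodule.le_div_iff_mul_le.mpr Submodule.mul_one_div_le_one

theorem vOp_mono {S T : Submodule A K} (h : S ≤ T) : vOp S ≤ vOp T :=
  one_div_antitone (one_div_antitone h)

theorem vOp_vOp (S : Submodule A K) : vOp (vOp S) = vOp S := by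
  have h : (1 : Submodule A K) / vOp S = 1 / S :=
    le_antisymm (one_div_antitone (le_vOp S)) (le_vOp _)
  rw [vOp, h, vOp]

theorem vOp_le_one {S : Submodule A K} (h : S ≤ 1) : vOp S ≤ 1 := by
  have h11 : (1 : Submodule A K) / 1 = 1 :=
    le_antisymm (fun z hz => by simpa using hz 1 (Submodule.one_le.mp le_rfl))
      (Submodule.one_le_one_div.mpr le_rfl)
  simpa only [vOp, h11] using vOp_mono h

theorem vOp_mul_le (S T : Submodule A K) : vOp S * vOp T ≤ vOp (S * T) := by
  have hS : 1 / (S * T) * S ≤ 1 / T :=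
    Submodule.le_div_iff_mul_le.mpr <| by
      rw [mul_assoc, mul_comm]
      exact Submodule.mul_one_div_le_one
  have hT : 1 / (S * T) * vOp T ≤ 1 / S := Submodule.le_div_iff_mul_le.mpr <|
    calc 1 / (S * T) * vOp T * S = 1 / (S * T) * S * vOp T := mul_right_comm _ _ _
      _ ≤ 1 / T * vOp T := mul_le_mul_left hS _
      _ ≤ 1 := Submodule.mul_one_div_le_one
  refine Submodule.le_div_iff_mul_le.mpr ?_
  calc vOp S * vOp T * (1 / (S * T)) = 1 / (S * T) * vOp T * vOp S := by
        rw [mul_comm, mul_comm (vOp S), mul_assoc]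
    _ ≤ 1 / S * vOp S := mul_le_mul_left hT _
    _ ≤ 1 := Submodule.mul_one_div_le_one

theorem vOp_pow_le (S : Submodule A K) : ∀ n : ℕ, vOp S ^ n ≤ vOp (S ^ n)
  | 0 => by simpa using le_vOp 1
  | n + 1 => by
    rw [pow_succ, pow_succ]
    exact (mul_le_mul_left (vOp_pow_le S n) _).trans (vOp_mul_le _ _)

theorem vOp_le_tOp {S J : Submodule A K} (hJ : J ≠ ⊥) (hfg : J.FG) (hle : J ≤ S) :
    vOp J ≤ tOp S :=
  le_sSup ⟨J, hJ, hfg, hle, rfl⟩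

theorem tOp_le {S T : Submodule A K}
    (h : ∀ J : Submodule A K, J ≠ ⊥ → J.FG → J ≤ S → vOp J ≤ T) : tOp S ≤ T :=
  sSup_le <| by rintro _ ⟨J, hJ, hfg, hle, rfl⟩; exact h J hJ hfg hle

theorem le_tOp (S : Submodule A K) : S ≤ tOp S := by
  intro z hz
  rcases eq_or_ne z 0 with rfl | hz0
  · exact zero_mem _
  exact vOp_le_tOp (by simpa using hz0) (Submodule.fg_span_singleton z)
    ((Submodule.span_singleton_le_iff_mem z S).mpr hz)
    (le_vOp _ (Submodule.mem_span_singleton_self z))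

theorem tOp_mono {S T : Submodule A K} (h : S ≤ T) : tOp S ≤ tOp T :=
  tOp_le fun _ hJ hfg hle => vOp_le_tOp hJ hfg (hle.trans h)

theorem tOp_le_one {S : Submodule A K} (h : S ≤ 1) : tOp S ≤ 1 :=
  tOp_le fun _ _ _ hle => vOp_le_one (hle.trans h)

theorem exists_le_vOp_of_le_tOp {S J : Submodule A K} (hJ : J ≠ ⊥) (hfg : J.FG)
    (hle : J ≤ tOp S) : ∃ L : Submodule A K, L ≠ ⊥ ∧ L.FG ∧ L ≤ S ∧ J ≤ vOp L := by
  set 𝒱 := {V | ∃ L : Submodule A K, L ≠ ⊥ ∧ L.FG ∧ L ≤ S ∧ V = vOp L}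
  have hne : 𝒱.Nonempty := by
    by_contra h
    rw [Set.not_nonempty_iff_eq_empty] at h
    have htOp : tOp S = sSup 𝒱 := rfl
    exact hJ (le_bot_iff.mp (hle.trans_eq (by rw [htOp, h, sSup_empty])))
  have hdir : DirectedOn (· ≤ ·) 𝒱 := by
    rintro _ ⟨L₁, hL₁, hfg₁, hle₁, rfl⟩ _ ⟨L₂, -, hfg₂, hle₂, rfl⟩
    refine ⟨vOp (L₁ ⊔ L₂), ⟨L₁ ⊔ L₂, ?_, hfg₁.sup hfg₂, sup_le hle₁ hle₂, rfl⟩,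
      vOp_mono le_sup_left, vOp_mono le_sup_right⟩
    exact fun h => hL₁ (le_bot_iff.mp (h ▸ le_sup_left))
  obtain ⟨_, ⟨L, hL, hLfg, hLS, rfl⟩, hJL⟩ :=
    (CompleteLattice.isCompactElement_iff_le_of_directed_sSup_le _ J).mp
      ((Submodule.fg_iff_compact J).mp hfg) 𝒱 hne hdir hle
  exact ⟨L, hL, hLfg, hLS, hJL⟩

theorem tOp_tOp (S : Submodule A K) : tOp (tOp S) = tOp S := by
  refine le_antisymm (tOp_le fun J hJ hfg hle => ?_) (le_tOp _)
  obtain ⟨L, hL, hLfg, hLS, hJL⟩ := exists_le_vOp_of_le_tOp hJ hfg hle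
  calc vOp J ≤ vOp (vOp L) := vOp_mono hJL
    _ = vOp L := vOp_vOp L
    _ ≤ tOp S := vOp_le_tOp hL hLfg hLS

end StarOperation

section MinimalPrimes

variable {R : Type*} [CommRing R]

theorem exists_mul_pow_mem_of_mem_minimalPrimes {I P : Ideal R} (hP : P ∈ I.minimalPrimes)
    {x : R} (hx : x ∈ P) : ∃ s ∉ P, ∃ n : ℕ, s * x ^ n ∈ I := by
  have := hP.isPrime
  have hxI : algebraMap R (Localization.AtPrime P) x ∈ (I.map (algebraMap R _)).radical := by
    rw [IsLocalization.AtPrime.radical_map_of_mem_minimalPrimes _ P I hP]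
    exact Ideal.mem_map_of_mem _ hx
  obtain ⟨n, hn⟩ := hxI
  rw [← map_pow, IsLocalization.mem_map_algebraMap_iff P.primeCompl] at hn
  obtain ⟨⟨⟨a, ha⟩, ⟨t, ht⟩⟩, h⟩ := hn
  rw [← map_mul, IsLocalization.eq_iff_exists P.primeCompl] at h
  obtain ⟨⟨c, hc⟩, h⟩ := h
  have hca : c * t * x ^ n = c * a := by linear_combination (h : c * (x ^ n * t) = c * a)
  exact ⟨c * t, P.primeCompl.mul_mem hc ht, n, hca ▸ I.mul_mem_left c ha⟩

theorem exists_span_singleton_mul_pow_le_of_mem_minimalPrimes {I P : Ideal R}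
    (hP : P ∈ I.minimalPrimes) {J : Ideal R} (hJ : J.FG) (hJP : J ≤ P) :
    ∃ s ∉ P, ∃ n : ℕ, Ideal.span {s} * J ^ n ≤ I := by
  induction J, hJ using Submodule.fg_induction with
  | singleton x =>
    obtain ⟨s, hs, n, hsx⟩ := exists_mul_pow_mem_of_mem_minimalPrimes hP
      (hJP (Submodule.mem_span_singleton_self x))
    refine ⟨s, hs, n, ?_⟩
    rwa [← Ideal.submodule_span_eq, Ideal.span_singleton_pow,
      Ideal.span_singleton_mul_span_singleton, Ideal.span_singleton_le_iff_mem]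
  | sup J₁ J₂ _ _ ih₁ ih₂ =>
    obtain ⟨s₁, hs₁, n₁, h₁⟩ := ih₁ (le_sup_left.trans hJP)
    obtain ⟨s₂, hs₂, n₂, h₂⟩ := ih₂ (le_sup_right.trans hJP)
    refine ⟨s₁ * s₂, fun h => (hP.isPrime.mem_or_mem h).elim hs₁ hs₂, n₁ + n₂, ?_⟩
    rw [← Ideal.span_singleton_mul_span_singleton]
    refine (Ideal.mul_mono_right Ideal.sup_pow_add_le_pow_sup_pow).trans ?_
    rw [Ideal.mul_sup]
    exact sup_le ((mul_right_comm _ _ _).le.trans (Ideal.mul_le_left.trans h₁))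
      ((mul_assoc _ _ _).le.trans (Ideal.mul_le_right.trans h₂))

end MinimalPrimes

section IntegralIdeal

variable {R K : Type*} [CommRing R] [Field K] [Algebra R K]

theorem toK_mono {I J : Ideal R} (h : I ≤ J) : toK R K I ≤ toK R K J :=
  Submodule.map_mono h

theorem toK_le_one (I : Ideal R) : toK R K I ≤ 1 := by
  rintro _ ⟨r, -, rfl⟩
  exact Submodule.mem_one.mpr ⟨r, rfl⟩

theorem algebraMap_mem_toK {I : Ideal R} {r : R} (hr : r ∈ I) : algebraMap R K r ∈ toK R K I :=
  ⟨r, hr, rfl⟩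

theorem toK_mul (I J : Ideal R) : toK R K (I * J) = toK R K I * toK R K J :=
  Submodule.map_mul I J (Algebra.ofId R K)

theorem toK_pow (I : Ideal R) (n : ℕ) : toK R K (I ^ n) = toK R K I ^ n :=
  Submodule.map_pow I (Algebra.ofId R K) n

theorem toK_span (s : Set R) : toK R K (Ideal.span s) = Submodule.span R (algebraMap R K '' s) :=
  Submodule.map_span _ s

theorem toK_comap_of_le_one {S : Submodule R K} (h : S ≤ 1) :
    toK R K (S.comap (Algebra.linearMap R K)) = S := by
  refine Submodule.map_comap_eq_of_le fun z hz => ?_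
  obtain ⟨r, rfl⟩ := Submodule.mem_one.mp (h hz)
  exact ⟨r, rfl⟩

theorem isTIdeal_comap_tOp (S : Submodule R K) (h : S ≤ 1) :
    IsTIdeal K ((tOp S).comap (Algebra.linearMap R K)) := by
  rw [IsTIdeal, toK_comap_of_le_one (tOp_le_one h), tOp_tOp]

theorem zero_mem_loc {P : Ideal R} (hP : P ≠ ⊤) : (0 : K) ∈ loc K P :=
  ⟨0, 1, (Ideal.ne_top_iff_one P).mp hP, by simp⟩

theorem loc_antitone {P P' : Ideal R} (h : P ≤ P') : loc K P' ⊆ loc K P :=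
  fun _ ⟨a, s, hs, hx⟩ => ⟨a, s, fun hsP => hs (h hsP), hx⟩

theorem mul_algebraMap_mem_loc {P : Ideal R} {x : K} (hx : x ∈ loc K P) (y : R) :
    x * algebraMap R K y ∈ loc K P := by
  obtain ⟨a, s, hs, hxs⟩ := hx
  exact ⟨a * y, s, hs, by rw [map_mul, ← hxs, mul_right_comm]⟩

theorem locIdealAt_mono {J J' P : Ideal R} (h : J ≤ J') : locIdealAt K J P ⊆ locIdealAt K J' P :=
  fun _ ⟨a, ha, s, hs, hx⟩ => ⟨a, h ha, s, hs, hx⟩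

theorem nagata_subset_loc_of_not_le {I M : Ideal R} (hM : M.IsPrime) (hIM : ¬I ≤ M) :
    (nagata K I : Set K) ⊆ loc K M := by
  rintro x ⟨n, hn⟩
  obtain ⟨s, hsI, hsM⟩ := SetLike.not_le_iff_exists.mp hIM
  obtain ⟨r, hr⟩ := hn _ (Ideal.pow_mem_pow hsI (n + 1))
  exact ⟨r, s ^ (n + 1), fun h => hsM (hM.mem_of_pow_mem _ h), hr⟩

theorem mul_mem_pow_of_mem_nagata {I : Ideal R} {x : K} {n : ℕ}
    (hx : ∀ y ∈ I ^ (n + 1), ∃ r : R, x * algebraMap R K y = algebraMap R K r) {a : R}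
    (ha : a ∈ I ^ (n + 1) * I ^ (n + 1)) :
    ∃ r ∈ I ^ (n + 1), x * algebraMap R K a = algebraMap R K r := by
  refine Submodule.mul_induction_on ha (fun b hb c hc => ?_) ?_
  · obtain ⟨r, hr⟩ := hx b hb
    exact ⟨r * c, Ideal.mul_mem_left _ r hc, by rw [map_mul, map_mul, ← hr, mul_assoc]⟩
  · rintro a₁ a₂ ⟨r₁, hr₁, e₁⟩ ⟨r₂, hr₂, e₂⟩
    exact ⟨r₁ + r₂, add_mem hr₁ hr₂, by rw [map_add, map_add, mul_add, e₁, e₂]⟩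

end IntegralIdeal

section FractionField

variable {R K : Type*} [CommRing R] [Field K] [Algebra R K] [IsFractionRing R K]

theorem algebraMap_mem_toK_iff {I : Ideal R} {r : R} : algebraMap R K r ∈ toK R K I ↔ r ∈ I :=
  ⟨fun ⟨_, hs, hsr⟩ => IsFractionRing.injective R K hsr ▸ hs, algebraMap_mem_toK⟩

theorem exists_fg_toK_eq {C : Ideal R} {L : Submodule R K} (hL : L ≠ ⊥) (hfg : L.FG)
    (hLC : L ≤ toK R K C) : ∃ J : Ideal R, J ≠ ⊥ ∧ J.FG ∧ J ≤ C ∧ toK R K J = L := by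
  set J := L.comap (Algebra.linearMap R K)
  have hJ : toK R K J = L := toK_comap_of_le_one (hLC.trans (toK_le_one C))
  refine ⟨J, fun h => hL (by rw [← hJ, h, toK, Submodule.map_bot]), ?_,
    fun r hr => algebraMap_mem_toK_iff.mp (hLC hr), hJ⟩
  exact Submodule.fg_of_fg_map_injective _ (IsFractionRing.injective R K) (hJ ▸ hfg)

theorem exists_fg_of_one_mem_tOp {C : Ideal R} (h : (1 : K) ∈ tOp (toK R K C)) :
    ∃ J : Ideal R, J ≠ ⊥ ∧ J.FG ∧ J ≤ C ∧ (1 : K) ∈ vOp (toK R K J) := by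
  obtain ⟨L, hL, hLfg, hLC, h1L⟩ := exists_le_vOp_of_le_tOp (by simp)
    (Submodule.fg_span_singleton 1) ((Submodule.span_singleton_le_iff_mem 1 _).mpr h)
  obtain ⟨J, hJ, hJfg, hJC, rfl⟩ := exists_fg_toK_eq hL hLfg hLC
  exact ⟨J, hJ, hJfg, hJC, h1L (Submodule.mem_span_singleton_self 1)⟩

theorem toK_ne_bot {I : Ideal R} (h : I ≠ ⊥) : toK R K I ≠ ⊥ := fun h' =>
  h (Submodule.map_injective_of_injective (IsFractionRing.injective R K)
    (h'.trans (Submodule.map_bot _).symm))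

theorem vOp_toK_le {C J : Ideal R} (hC : IsTIdeal K C) (hJ : J ≠ ⊥) (hfg : J.FG) (hJC : J ≤ C) :
    vOp (toK R K J) ≤ toK R K C :=
  (vOp_le_tOp (toK_ne_bot hJ) (Submodule.FG.map _ hfg) (toK_mono hJC)).trans hC.le

theorem exists_isTMaximal_le {J : Ideal R} (hJ : J ≠ ⊤) (ht : IsTIdeal K J) :
    ∃ M : Ideal R, IsTMaximal K M ∧ J ≤ M := by
  have hchain : ∀ c ⊆ {C : Ideal R | C ≠ ⊤ ∧ IsTIdeal K C}, IsChain (· ≤ ·) c →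
      ∀ C ∈ c, ∃ ub ∈ {C : Ideal R | C ≠ ⊤ ∧ IsTIdeal K C}, ∀ D ∈ c, D ≤ ub := by
    intro c hc hchain C hC
    refine ⟨sSup c, ⟨?_, ?_⟩, fun _ => le_sSup⟩
    · rw [Ne, Ideal.eq_top_iff_one, Submodule.mem_sSup_of_directed ⟨C, hC⟩ hchain.directedOn]
      rintro ⟨D, hD, h1D⟩
      exact (hc hD).1 ((Ideal.eq_top_iff_one D).mpr h1D)
    · refine le_antisymm (tOp_le fun L hL hLfg hLle => ?_) (le_tOp _)
      obtain ⟨J', hJ', hJ'fg, hJ'le, rfl⟩ := exists_fg_toK_eq hL hLfg hLle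
      obtain ⟨D, hD, hJ'D⟩ :=
        (CompleteLattice.isCompactElement_iff_le_of_directed_sSup_le _ J').mp
          ((Submodule.fg_iff_compact J').mp hJ'fg) c ⟨C, hC⟩ hchain.directedOn hJ'le
      exact (vOp_toK_le (hc hD).2 hJ' hJ'fg hJ'D).trans (toK_mono (le_sSup hD))
  obtain ⟨M, hJM, hM⟩ := zorn_le_nonempty₀ _ hchain J ⟨hJ, ht⟩
  exact ⟨M, ⟨hM.prop.1, hM.prop.2, fun C hC hCt hMC => le_antisymm (hM.2 ⟨hC, hCt⟩ hMC) hMC⟩,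
    hJM⟩

theorem IsTMaximal.one_notMem_tOp {M : Ideal R} (hM : IsTMaximal K M) :
    (1 : K) ∉ tOp (toK R K M) := by
  rw [hM.2.1, ← map_one (algebraMap R K), algebraMap_mem_toK_iff]
  exact (Ideal.ne_top_iff_one M).mp hM.1

theorem mem_one_of_forall_mem_loc {z : K} (h : ∀ M : Ideal R, IsTMaximal K M → z ∈ loc K M) :
    z ∈ (1 : Submodule R K) := by
  -- the ideal `{r | z r ∈ R}` of denominators of `z`
  set D : Ideal R :=
    ((1 : Submodule R K).comap (LinearMap.mulLeft R z)).comap (Algebra.linearMap R K)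
  have hD : IsTIdeal K D := by
    refine le_antisymm (tOp_le fun L _ _ hLD w hw => ?_) (le_tOp _)
    obtain ⟨r, rfl⟩ := Submodule.mem_one.mp (vOp_le_one (hLD.trans (toK_le_one D)) hw)
    refine algebraMap_mem_toK (show z * algebraMap R K r ∈ (1 : Submodule R K) from ?_)
    rw [mul_comm]
    refine hw z fun v hv => ?_
    obtain ⟨d, hd, rfl⟩ := hLD hv
    exact hd
  by_cases hD1 : D = ⊤
  · simpa [D] using (Ideal.eq_top_iff_one D).mp hD1
  · obtain ⟨M, hM, hDM⟩ := exists_isTMaximal_le hD1 hD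
    obtain ⟨a, s, hs, hzs⟩ := h M hM
    have hsD : z * algebraMap R K s ∈ (1 : Submodule R K) := hzs ▸ Submodule.mem_one.mpr ⟨a, rfl⟩
    exact absurd (hDM hsD) hs

theorem IsPVMD.mem_loc_or_inv_mem_loc (hR : IsPVMD R K) {P : Ideal R}
    (hP : (1 : K) ∉ tOp (toK R K P)) {x : K} (hx : x ≠ 0) : x ∈ loc K P ∨ x⁻¹ ∈ loc K P := by
  obtain ⟨a, b, -, rfl⟩ := IsFractionRing.div_surjective (A := R) x
  obtain ⟨ha0, hb0⟩ := div_ne_zero_iff.mp hx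
  by_contra! h
  set J := Ideal.span {a, b}
  have hJ : J ≠ ⊥ := fun hJ => ha0 (by rw [Ideal.span_eq_bot.mp hJ a (by simp), map_zero])
  have h1 : (1 : K) ∈ tOp (toK R K J * dual (toK R K J)) := by
    rw [hR J hJ ⟨{a, b}, by simp [J]⟩]
    exact Submodule.mem_one.mpr ⟨1, map_one _⟩
  refine hP (tOp_mono (Submodule.mul_le.mpr fun j hj u hu => ?_) h1)
  have hJab : toK R K J = Submodule.span R {algebraMap R K a, algebraMap R K b} := by
    rw [toK_span, Set.image_pair]
  rw [hJab] at hj hu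
  obtain ⟨α, hα⟩ := Submodule.mem_one.mp (hu _ (Submodule.subset_span (Set.mem_insert _ _)))
  obtain ⟨β, hβ⟩ :=
    Submodule.mem_one.mp (hu _ (Submodule.subset_span (Set.mem_insert_of_mem _ rfl)))
  have hαP : α ∈ P := by
    by_contra hαP
    exact h.2 ⟨β, α, hαP, by rw [hα, hβ]; field_simp⟩
  have hβP : β ∈ P := by
    by_contra hβP
    exact h.1 ⟨α, β, hβP, by rw [hα, hβ]; field_simp⟩
  have hspan : Submodule.span R {algebraMap R K a, algebraMap R K b} ≤
      (toK R K P).comap (LinearMap.mulRight R u) := by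
    rw [Submodule.span_le, Set.insert_subset_iff, Set.singleton_subset_iff]
    exact ⟨by simpa [mul_comm, hα] using algebraMap_mem_toK (K := K) hαP,
      by simpa [mul_comm, hβ] using algebraMap_mem_toK (K := K) hβP⟩
  exact hspan hj

theorem mem_of_algebraMap_mem_locIdealAt {J P : Ideal R} (hJ : J.IsPrime) (hJP : J ≤ P) {r : R}
    (h : algebraMap R K r ∈ locIdealAt K J P) : r ∈ J := by
  obtain ⟨a, ha, s, hs, hrs⟩ := h
  rw [← map_mul] at hrs
  rw [← IsFractionRing.injective R K hrs] at ha
  exact (hJ.mem_or_mem ha).resolve_right fun hsJ => hs (hJP hsJ)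

theorem le_of_iInter_locIdealAt_eq {I P Q : Ideal R} (hP : P.IsPrime) (hIP : I ≤ P)
    (hQ : ⋂ n : ℕ, locIdealAt K (I ^ (n + 1)) P = locIdealAt K Q P) : Q ≤ P := by
  intro q hq
  have hqQ : algebraMap R K q ∈ locIdealAt K Q P :=
    ⟨q, hq, 1, (Ideal.ne_top_iff_one P).mp hP.ne_top, by simp⟩
  rw [← hQ] at hqQ
  exact mem_of_algebraMap_mem_locIdealAt hP le_rfl
    (locIdealAt_mono (by simpa using hIP) (Set.mem_iInter.mp hqQ 0))

theorem eventually_exists_denominator_notMem_locIdealAt {I P Q : Ideal R} (hP : P.IsPrime)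
    (hIP : I ≤ P) (hQ : Q.IsPrime) (hIQ : ⋂ n : ℕ, locIdealAt K (I ^ (n + 1)) P = locIdealAt K Q P)
    {x : K} (hx : x ∈ loc K Q) :
    ∀ᶠ n in Filter.atTop, ∃ s c : R, x * algebraMap R K s = algebraMap R K c ∧
      algebraMap R K s ∉ locIdealAt K (I ^ (n + 1)) P := by
  obtain ⟨c, s, hs, hxs⟩ := hx
  have hsQ : algebraMap R K s ∉ ⋂ n : ℕ, locIdealAt K (I ^ (n + 1)) P := by
    rw [hIQ]
    exact fun h =>
      hs (mem_of_algebraMap_mem_locIdealAt hQ (le_of_iInter_locIdealAt_eq hP hIP hIQ) h)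
  obtain ⟨m, hm⟩ : ∃ m : ℕ, algebraMap R K s ∉ locIdealAt K (I ^ (m + 1)) P := by
    simpa using hsQ
  exact Filter.eventually_atTop.mpr ⟨m, fun n hn => ⟨s, c, hxs,
    fun h => hm (locIdealAt_mono (Ideal.pow_le_pow_right (by omega)) h)⟩⟩

theorem exists_inv_notMem_locIdealAt_of_mem_nagata {I P : Ideal R} (hIP : I ≤ P) {x : K}
    (hx : x ∈ nagata K I) (hx0 : x ≠ 0) : ∃ n : ℕ, x⁻¹ ∉ locIdealAt K (I ^ (n + 1)) P := by
  obtain ⟨n, hn⟩ := hx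
  refine ⟨2 * n + 1, fun ⟨a, ha, t, ht, hxt⟩ => ht ?_⟩
  rw [show 2 * n + 1 + 1 = (n + 1) + (n + 1) by ring, pow_add] at ha
  obtain ⟨r, hr, hxa⟩ := mul_mem_pow_of_mem_nagata hn ha
  have htr : algebraMap R K t = algebraMap R K r := by
    rw [← hxa, ← hxt, ← mul_assoc, mul_inv_cancel₀ hx0, one_mul]
  rw [IsFractionRing.injective R K htr]
  exact hIP (Ideal.pow_le_self n.succ_ne_zero hr)

theorem mul_algebraMap_mem_loc_of_le (hR : IsPVMD R K) {M P J : Ideal R} (hM : IsTMaximal K M)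
    (hPM : P ≤ M) {x : K} {s c : R} (hxs : x * algebraMap R K s = algebraMap R K c)
    (hs : algebraMap R K s ∉ locIdealAt K J P) {y : R} (hy : y ∈ J) :
    x * algebraMap R K y ∈ loc K M := by
  have hP1 : (1 : R) ∉ P := fun h => hM.1 ((Ideal.eq_top_iff_one M).mpr (hPM h))
  rcases eq_or_ne (algebraMap R K y) 0 with hy0 | hy0
  · rw [hy0, mul_zero]
    exact zero_mem_loc hM.1
  have hs0 : algebraMap R K s ≠ 0 := fun h => hs ⟨0, J.zero_mem, 1, hP1, by simp [h]⟩
  rcases hR.mem_loc_or_inv_mem_loc hM.one_notMem_tOp (div_ne_zero hy0 hs0) with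
    ⟨d, t, ht, hw⟩ | ⟨d, t, ht, hw⟩
  · refine ⟨c * d, t, ht, ?_⟩
    rw [map_mul, ← hxs, ← hw]
    field_simp
  · refine absurd ⟨d * y, J.mul_mem_left d hy, t, fun htP => ht (hPM htP), ?_⟩ hs
    rw [map_mul, ← hw]
    field_simp

end FractionField

section Domain

variable {R K : Type*} [CommRing R] [IsDomain R] [Field K] [Algebra R K] [IsFractionRing R K]

theorem mem_of_span_singleton_mul_le {C J : Ideal R} (hC : IsTIdeal K C) (hJ : J ≠ ⊥)
    (hfg : J.FG) (h1 : (1 : K) ∈ vOp (toK R K J)) {r : R} (hr : Ideal.span {r} * J ≤ C) :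
    r ∈ C := by
  rcases eq_or_ne r 0 with rfl | hr0
  · exact C.zero_mem
  have hrJ : Ideal.span {r} * J ≠ ⊥ := by simp [hr0, hJ]
  refine algebraMap_mem_toK_iff.mp
    (vOp_toK_le hC hrJ ((Submodule.fg_span_singleton r).mul hfg) hr ?_)
  rw [toK_mul]
  simpa using vOp_mul_le _ _ (Submodule.mul_mem_mul
    (le_vOp _ (algebraMap_mem_toK (Ideal.mem_span_singleton_self r))) h1)

theorem IsTMaximal.isPrime {M : Ideal R} (hM : IsTMaximal K M) : M.IsPrime := by
  refine Ideal.isPrime_iff.mpr ⟨hM.1, fun {a b} hab => or_iff_not_imp_left.mpr fun ha => ?_⟩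
  set S := tOp (toK R K (M ⊔ Ideal.span {a}))
  by_cases h1 : (1 : K) ∈ S
  · obtain ⟨J, hJ, hfg, hJle, h1J⟩ := exists_fg_of_one_mem_tOp h1
    refine mem_of_span_singleton_mul_le hM.2.1 hJ hfg h1J ((Ideal.mul_mono_right hJle).trans ?_)
    rw [Ideal.mul_sup, Ideal.span_singleton_mul_span_singleton, sup_le_iff,
      Ideal.span_singleton_le_iff_mem]
    exact ⟨Ideal.mul_le_right, by rwa [mul_comm]⟩
  · set C := S.comap (Algebra.linearMap R K)
    have hSa : ∀ r ∈ M ⊔ Ideal.span {a}, r ∈ C := fun r hr => le_tOp _ (algebraMap_mem_toK hr)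
    have hC : C ≠ ⊤ := fun h => h1 (by simpa [C] using (Ideal.eq_top_iff_one C).mp h)
    have hCM := hM.2.2 C hC (isTIdeal_comap_tOp _ (toK_le_one _))
      fun m hm => hSa m (Submodule.mem_sup_left hm)
    exact absurd (hCM ▸ hSa a (Submodule.mem_sup_right (Ideal.mem_span_singleton_self a))) ha

theorem one_notMem_tOp_of_mem_minimalPrimes {I P : Ideal R} (hI : IsTIdeal K I)
    (hP : P ∈ I.minimalPrimes) : (1 : K) ∉ tOp (toK R K P) := by
  intro h
  obtain ⟨J, hJ, hfg, hJP, h1J⟩ := exists_fg_of_one_mem_tOp h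
  obtain ⟨s, hs, n, hsJ⟩ := exists_span_singleton_mul_pow_le_of_mem_minimalPrimes hP hfg hJP
  refine hs (hP.le (mem_of_span_singleton_mul_le hI (pow_ne_zero n hJ) hfg.pow ?_ hsJ))
  rw [toK_pow]
  simpa using vOp_pow_le _ n (Submodule.pow_mem_pow _ h1J n)

theorem nagata_subset_loc_of_mem_minimalPrimes (hR : IsPVMD R K) {I P Q : Ideal R}
    (hI : IsTIdeal K I) (hP : P ∈ I.minimalPrimes)
    (hQ : ⋂ n : ℕ, locIdealAt K (I ^ (n + 1)) P = locIdealAt K Q P) :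
    (nagata K I : Set K) ⊆ loc K Q := by
  intro x hx
  have hQP := le_of_iInter_locIdealAt_eq hP.isPrime hP.le hQ
  rcases eq_or_ne x 0 with rfl | hx0
  · exact zero_mem_loc (ne_top_of_le_ne_top hP.isPrime.ne_top hQP)
  rcases hR.mem_loc_or_inv_mem_loc (one_notMem_tOp_of_mem_minimalPrimes hI hP) hx0 with
    hxP | ⟨c, t, ht, hxt⟩
  · exact loc_antitone hQP hxP
  by_cases hc : c ∈ Q
  · obtain ⟨n, hn⟩ := exists_inv_notMem_locIdealAt_of_mem_nagata hP.le hx hx0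
    have hxQ : x⁻¹ ∈ locIdealAt K Q P := ⟨c, hc, t, ht, hxt⟩
    rw [← hQ] at hxQ
    exact absurd (Set.mem_iInter.mp hxQ n) hn
  · exact ⟨t, c, hc, by rw [← hxt, ← mul_assoc, mul_inv_cancel₀ hx0, one_mul]⟩

theorem mem_nagata_of_forall_mem_loc (hR : IsPVMD R K) {I : Ideal R}
    (hfin : I.minimalPrimes.Finite) {Q : Ideal R → Ideal R}
    (hQ : ∀ P ∈ I.minimalPrimes, (Q P).IsPrime ∧
      (⋂ n : ℕ, locIdealAt K (I ^ (n + 1)) P) = locIdealAt K (Q P) P) {x : K}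
    (hxQ : ∀ P ∈ I.minimalPrimes, x ∈ loc K (Q P))
    (hxM : ∀ M : Ideal R, IsTMaximal K M → ¬I ≤ M → x ∈ loc K M) : x ∈ nagata K I := by
  obtain ⟨N, hN⟩ := ((Filter.eventually_all_finite hfin).mpr fun P hP =>
    eventually_exists_denominator_notMem_locIdealAt hP.isPrime hP.le (hQ P hP).1 (hQ P hP).2
      (hxQ P hP)).exists
  refine ⟨N, fun y hy => ?_⟩
  suffices h : x * algebraMap R K y ∈ (1 : Submodule R K) by
    obtain ⟨r, hr⟩ := Submodule.mem_one.mp h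
    exact ⟨r, hr.symm⟩
  refine mem_one_of_forall_mem_loc fun M hM => ?_
  by_cases hIM : I ≤ M
  · have := hM.isPrime
    obtain ⟨P, hP, hPM⟩ := Ideal.exists_minimalPrimes_le hIM
    obtain ⟨s, c, hxs, hs⟩ := hN P hP
    exact mul_algebraMap_mem_loc_of_le hR hM hPM hxs hs hy
  · exact mul_algebraMap_mem_loc (hxM M hM hIM) y

end Domain

section Statements

variable {R : Type*} [CommRing R] [IsDomain R]
variable {K : Type*} [Field K] [Algebra R K] [IsFractionRing R K]

theorem statement_13_general (hR : IsPVMD R K) (I : Ideal R)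
    (htI : IsTIdeal K I) (Q : Ideal R → Ideal R)
    (hQ : ∀ P ∈ I.minimalPrimes, (Q P).IsPrime ∧
      (⋂ n : ℕ, locIdealAt K (I ^ (n + 1)) P) = locIdealAt K (Q P) P) :
    ((nagata K I : Set K) ⊆
        (⋂ P ∈ I.minimalPrimes, loc K (Q P)) ∩
          (⋂ M ∈ {M : Ideal R | IsTMaximal K M ∧ ¬ I ≤ M}, loc K M)) ∧
      (I.minimalPrimes.Finite →
        (nagata K I : Set K) =
          (⋂ P ∈ I.minimalPrimes, loc K (Q P)) ∩
            (⋂ M ∈ {M : Ideal R | IsTMaximal K M ∧ ¬ I ≤ M}, loc K M)) := by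
  have hsub : (nagata K I : Set K) ⊆
      (⋂ P ∈ I.minimalPrimes, loc K (Q P)) ∩
        (⋂ M ∈ {M : Ideal R | IsTMaximal K M ∧ ¬ I ≤ M}, loc K M) := fun x hx =>
    ⟨Set.mem_iInter₂.mpr fun P hP =>
        nagata_subset_loc_of_mem_minimalPrimes hR htI hP (hQ P hP).2 hx,
      Set.mem_iInter₂.mpr fun M hM => nagata_subset_loc_of_not_le hM.1.isPrime hM.2 hx⟩
  refine ⟨hsub, fun hfin => hsub.antisymm ?_⟩
  rintro x ⟨hxQ, hxM⟩
  exact mem_nagata_of_forall_mem_loc hR hfin hQ (Set.mem_iInter₂.mp hxQ)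
    fun M hM hIM => Set.mem_iInter₂.mp hxM M ⟨hM, hIM⟩

/-- Let `R` be a PVMD, `I` a `t`-ideal of `R`, `{P_α}` the minimal
primes of `I`, `{M_β}` the `t`-maximal ideals not containing `I`, and for each minimal
prime `P` let `Q P` be the (unique) prime with `⋂_{n ≥ 1} Iⁿ R_P = (Q P) R_P`. Then
`T(I) ⊆ (⋂ R_{Q P}) ∩ (⋂ R_{M_β})`, with equality if `I` has finitely many minimal
primes. -/
theorem statement_13 (hR : IsPVMD R K) (I : Ideal R) (hbot : I ≠ ⊥) (htop : I ≠ ⊤)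
    (htI : IsTIdeal K I) (Q : Ideal R → Ideal R)
    (hQ : ∀ P ∈ I.minimalPrimes, (Q P).IsPrime ∧
      (⋂ n : ℕ, locIdealAt K (I ^ (n + 1)) P) = locIdealAt K (Q P) P) :
    ((nagata K I : Set K) ⊆
        (⋂ P ∈ I.minimalPrimes, loc K (Q P)) ∩
          (⋂ M ∈ {M : Ideal R | IsTMaximal K M ∧ ¬ I ≤ M}, loc K M)) ∧
      (I.minimalPrimes.Finite →
        (nagata K I : Set K) =
          (⋂ P ∈ I.minimalPrimes, loc K (Q P)) ∩
            (⋂ M ∈ {M : Ideal R | IsTMaximal K M ∧ ¬ I ≤ M}, loc K M)) :=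
  statement_13_general hR I htI Q hQ

end Statements

end

end PVMDPaper
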